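/- arXiv:2203.08614 — 5 statements merged into one kernel-verified Lean document; each statement's English description precedes it below -/
import Mathlib

section
/- For every λ ∈ (0,1) and integer d ≥ 2, there exists a unique x > 0 such that Σ_{u=0}^∞ (1−λ) ∏_{v=1}^u dλ/(1 + v(d−1)λx) = 1. -/
open scoped BigOperators

/-- The term `π_u(x) = (1−λ) ∏_{v=1}^u dλ/(1 + v(d−1)λx)` (empty product = 1). -/
noncomputable def piTerm (d : ℕ) (lam x : ℝ) (u : ℕ) : ℝ :=
  (1 - lam) * ∏ v ∈ Finset.Icc 1 u, (d * lam) / (1 + (v : ℝ) * ((d : ℝ) - 1) * lam * x)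

/-- `φ(x) = Σ_{u=0}^∞ π_u(x)`. -/
noncomputable def phi (d : ℕ) (lam : ℝ) (x : ℝ) : ℝ := ∑' u : ℕ, piTerm d lam x u

/-!
Each term `π_u(x)` is positive, decreasing in `x ≥ 0`, and for `x > 0` at most
`(1-λ) (d/((d-1)x))^u / u!`, so `φ` is finite, continuous and strictly decreasing on `(0, ∞)`.
If `λx > 1`, every factor is at most `q = dλ/(1+(d-1)λx) < λ`, so `φ(x) ≤ (1-λ)/(1-q) < 1`.
At `x = 0` the terms are `(1-λ)(dλ)^u` with `dλ > λ`, so some partial sum exceeds `1`, and by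
continuity so does `φ` at small `x > 0`. The intermediate value theorem gives the root, strict
monotonicity its uniqueness.
-/

open Filter Topology Finset

noncomputable def piFactor (d : ℕ) (lam x : ℝ) (v : ℕ) : ℝ :=
  d * lam / (1 + (v : ℝ) * ((d : ℝ) - 1) * lam * x)

section

variable {d : ℕ} {lam x : ℝ}

theorem piTerm_eq_mul_prod_piFactor (u : ℕ) :
    piTerm d lam x u = (1 - lam) * ∏ v ∈ Icc 1 u, piFactor d lam x v := rfl

theorem piTerm_zero : piTerm d lam x 0 = 1 - lam := by
  simp [piTerm]

theorem piTerm_one : piTerm d lam x 1 = (1 - lam) * piFactor d lam x 1 := by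
  simp [piTerm, piFactor]

theorem piTerm_succ (u : ℕ) :
    piTerm d lam x (u + 1) = piTerm d lam x u * piFactor d lam x (u + 1) := by
  simp only [piTerm_eq_mul_prod_piFactor, prod_Icc_succ_top (Nat.le_add_left 1 u), mul_assoc]

theorem piTerm_of_x_eq_zero (u : ℕ) : piTerm d lam 0 u = (1 - lam) * (d * lam) ^ u := by
  simp [piTerm]

theorem piFactor_denom_pos (hd : 1 ≤ d) (hl : 0 < lam) (hx : 0 ≤ x) (v : ℕ) :
    0 < 1 + (v : ℝ) * ((d : ℝ) - 1) * lam * x := by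
  have hd' : (0 : ℝ) ≤ (d : ℝ) - 1 := sub_nonneg.2 (Nat.one_le_cast.2 hd)
  have := mul_nonneg (mul_nonneg (mul_nonneg v.cast_nonneg hd') hl.le) hx
  linarith

theorem piFactor_pos (hd : 1 ≤ d) (hl : 0 < lam) (hx : 0 ≤ x) (v : ℕ) :
    0 < piFactor d lam x v := by
  have hd' : (0 : ℝ) < d := Nat.cast_pos.2 hd
  exact div_pos (mul_pos hd' hl) (piFactor_denom_pos hd hl hx v)

theorem piFactor_antitoneOn (hd : 1 ≤ d) (hl : 0 < lam) (v : ℕ) :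
    AntitoneOn (piFactor d lam · v) (Set.Ici 0) := by
  intro x hx y _ hxy
  have hd' : (0 : ℝ) ≤ (d : ℝ) - 1 := sub_nonneg.2 (Nat.one_le_cast.2 hd)
  have := mul_nonneg (mul_nonneg v.cast_nonneg hd') hl.le
  dsimp only [piFactor]
  gcongr
  exact piFactor_denom_pos hd hl hx v

theorem piFactor_strictAntiOn (hd : 1 < d) (hl : 0 < lam) {v : ℕ} (hv : 0 < v) :
    StrictAntiOn (piFactor d lam · v) (Set.Ici 0) := by
  intro x hx y _ hxy
  have hd' : (0 : ℝ) < (d : ℝ) - 1 := sub_pos.2 (Nat.one_lt_cast.2 hd)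
  have hv' : (0 : ℝ) < v := by exact_mod_cast hv
  have := mul_pos (mul_pos hv' hd') hl
  dsimp only [piFactor]
  gcongr
  exact piFactor_denom_pos hd.le hl hx v

theorem piFactor_le_piFactor_one (hd : 1 ≤ d) (hl : 0 < lam) (hx : 0 ≤ x) {v : ℕ} (hv : 1 ≤ v) :
    piFactor d lam x v ≤ piFactor d lam x 1 := by
  have hd' : (0 : ℝ) ≤ (d : ℝ) - 1 := sub_nonneg.2 (Nat.one_le_cast.2 hd)
  unfold piFactor
  gcongr

theorem piFactor_le_div (hd : 1 < d) (hl : 0 < lam) (hx : 0 < x) {v : ℕ} (hv : 0 < v) :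
    piFactor d lam x v ≤ d / (((d : ℝ) - 1) * x) / v := by
  have hd' : (0 : ℝ) < (d : ℝ) - 1 := sub_pos.2 (Nat.one_lt_cast.2 hd)
  have hv' : (0 : ℝ) < v := by exact_mod_cast hv
  calc piFactor d lam x v ≤ d * lam / ((v : ℝ) * ((d : ℝ) - 1) * lam * x) := by
        unfold piFactor
        gcongr
        linarith
    _ = d / (((d : ℝ) - 1) * x) / v := by field_simp

theorem piFactor_one_lt (hd : 1 < d) (hl : 0 < lam) (hx : 1 < lam * x) :
    piFactor d lam x 1 < lam := by
  have hd' : (1 : ℝ) < d := Nat.one_lt_cast.2 hd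
  have key := mul_pos hl (mul_pos (sub_pos.2 hd') (sub_pos.2 hx))
  unfold piFactor
  rw [Nat.cast_one, one_mul, div_lt_iff₀ (by nlinarith)]
  nlinarith

theorem piTerm_pos (hd : 1 ≤ d) (hl0 : 0 < lam) (hl1 : lam < 1) (hx : 0 ≤ x) (u : ℕ) :
    0 < piTerm d lam x u :=
  mul_pos (sub_pos.2 hl1) (prod_pos fun v _ => piFactor_pos hd hl0 hx v)

theorem piTerm_antitoneOn (hd : 1 ≤ d) (hl0 : 0 < lam) (hl1 : lam ≤ 1) (u : ℕ) :
    AntitoneOn (piTerm d lam · u) (Set.Ici 0) := by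
  intro x hx y hy hxy
  refine mul_le_mul_of_nonneg_left (prod_le_prod (fun v _ => ?_) fun v _ => ?_) (sub_nonneg.2 hl1)
  · exact (piFactor_pos hd hl0 hy v).le
  · exact piFactor_antitoneOn hd hl0 v hx hy hxy

theorem piTerm_one_strictAntiOn (hd : 1 < d) (hl0 : 0 < lam) (hl1 : lam < 1) :
    StrictAntiOn (piTerm d lam · 1) (Set.Ici 0) := by
  intro x hx y hy hxy
  simp only [piTerm_one]
  exact mul_lt_mul_of_pos_left (piFactor_strictAntiOn hd hl0 one_pos hx hy hxy) (sub_pos.2 hl1)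

theorem piTerm_le_geometric (hd : 1 ≤ d) (hl0 : 0 < lam) (hl1 : lam ≤ 1) (hx : 0 ≤ x) (u : ℕ) :
    piTerm d lam x u ≤ (1 - lam) * piFactor d lam x 1 ^ u := by
  refine mul_le_mul_of_nonneg_left ?_ (sub_nonneg.2 hl1)
  calc ∏ v ∈ Icc 1 u, piFactor d lam x v ≤ ∏ _v ∈ Icc 1 u, piFactor d lam x 1 :=
        prod_le_prod (fun v _ => (piFactor_pos hd hl0 hx v).le)
          fun v hv => piFactor_le_piFactor_one hd hl0 hx (mem_Icc.1 hv).1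
    _ = piFactor d lam x 1 ^ u := by simp

theorem piTerm_le_pow_div_factorial (hd : 1 < d) (hl0 : 0 < lam) (hl1 : lam < 1) (hx : 0 < x)
    (u : ℕ) : piTerm d lam x u ≤ (1 - lam) * ((d / (((d : ℝ) - 1) * x)) ^ u / u.factorial) := by
  have hK : 0 ≤ d / (((d : ℝ) - 1) * x) :=
    div_nonneg d.cast_nonneg (mul_nonneg (sub_nonneg.2 (Nat.one_le_cast.2 hd.le)) hx.le)
  induction u with
  | zero => simp [piTerm_zero]
  | succ u ih =>
    calc piTerm d lam x (u + 1) = piTerm d lam x u * piFactor d lam x (u + 1) := piTerm_succ u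
      _ ≤ (1 - lam) * ((d / (((d : ℝ) - 1) * x)) ^ u / u.factorial) *
            (d / (((d : ℝ) - 1) * x) / (u + 1 : ℕ)) :=
        mul_le_mul ih (piFactor_le_div hd hl0 hx u.succ_pos)
          (piFactor_pos hd.le hl0 hx.le _).le (by have := sub_pos.2 hl1; positivity)
      _ = (1 - lam) * ((d / (((d : ℝ) - 1) * x)) ^ (u + 1) / (u + 1).factorial) := by
        rw [pow_succ, Nat.factorial_succ]
        push_cast
        field_simp

theorem summable_piTerm (hd : 1 < d) (hl0 : 0 < lam) (hl1 : lam < 1) (hx : 0 < x) :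
    Summable (piTerm d lam x) :=
  .of_nonneg_of_le (fun u => (piTerm_pos hd.le hl0 hl1 hx.le u).le)
    (piTerm_le_pow_div_factorial hd hl0 hl1 hx)
    ((Real.summable_pow_div_factorial _).mul_left _)

theorem phi_lt_one (hd : 1 < d) (hl0 : 0 < lam) (hl1 : lam < 1) (hx : 1 < lam * x) :
    phi d lam x < 1 := by
  have hx0 : 0 < x := pos_of_mul_pos_right (one_pos.trans hx) hl0.le
  set q := piFactor d lam x 1
  have hq0 : 0 ≤ q := (piFactor_pos hd.le hl0 hx0.le 1).le
  have hq : q < lam := piFactor_one_lt hd hl0 hx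
  calc phi d lam x ≤ ∑' u : ℕ, (1 - lam) * q ^ u :=
        (summable_piTerm hd hl0 hl1 hx0).tsum_le_tsum
          (piTerm_le_geometric hd.le hl0 hl1.le hx0.le)
          ((summable_geometric_of_lt_one hq0 (hq.trans hl1)).mul_left _)
    _ = (1 - lam) / (1 - q) := by
        rw [tsum_mul_left, tsum_geometric_of_lt_one hq0 (hq.trans hl1), div_eq_mul_inv]
    _ < 1 := by rw [div_lt_one (by linarith)]; linarith

theorem continuousOn_piTerm (hd : 1 ≤ d) (hl : 0 < lam) (u : ℕ) :
    ContinuousOn (piTerm d lam · u) (Set.Ici 0) := by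
  refine continuousOn_const.mul (continuousOn_finsetProd _ fun v _ => ?_)
  exact continuousOn_const.div (by fun_prop) fun x hx => (piFactor_denom_pos hd hl hx v).ne'

theorem continuousOn_phi (hd : 1 < d) (hl0 : 0 < lam) (hl1 : lam < 1) {a : ℝ} (ha : 0 < a) :
    ContinuousOn (phi d lam) (Set.Ici a) := by
  refine continuousOn_tsum (fun u => (continuousOn_piTerm hd.le hl0 u).mono
    (Set.Ici_subset_Ici.2 ha.le)) (summable_piTerm hd hl0 hl1 ha) fun u x hx => ?_
  have hx0 : 0 ≤ x := ha.le.trans hx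
  rw [Real.norm_of_nonneg (piTerm_pos hd.le hl0 hl1 hx0 u).le]
  exact piTerm_antitoneOn hd.le hl0 hl1.le u ha.le hx0 hx

theorem strictAntiOn_phi (hd : 1 < d) (hl0 : 0 < lam) (hl1 : lam < 1) :
    StrictAntiOn (phi d lam) (Set.Ioi 0) := by
  intro x hx y hy hxy
  have hx' := Set.Ioi_subset_Ici_self hx
  have hy' := Set.Ioi_subset_Ici_self hy
  exact (summable_piTerm hd hl0 hl1 hy).tsum_lt_tsum (i := 1)
    (fun u => piTerm_antitoneOn hd.le hl0 hl1.le u hx' hy' hxy.le)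
    (piTerm_one_strictAntiOn hd hl0 hl1 hx' hy' hxy) (summable_piTerm hd hl0 hl1 hx)

theorem exists_sum_range_piTerm_zero_gt_one (hd : 1 < d) (hl0 : 0 < lam) (hl1 : lam < 1) :
    ∃ M, 1 < ∑ u ∈ range M, piTerm d lam 0 u := by
  have hdl : lam < d * lam := lt_mul_left hl0 (Nat.one_lt_cast.2 hd)
  obtain ⟨r, hlr, hr⟩ := exists_between (lt_min hdl hl1)
  have hr0 : 0 ≤ r := hl0.le.trans hlr.le
  have hr1 : r < 1 := hr.trans_le (min_le_right _ _)
  have hlim : Tendsto (fun M => ∑ u ∈ range M, (1 - lam) * r ^ u) atTop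
      (𝓝 ((1 - lam) * (1 - r)⁻¹)) :=
    ((hasSum_geometric_of_lt_one hr0 hr1).mul_left (1 - lam)).tendsto_sum_nat
  have hgt : 1 < (1 - lam) * (1 - r)⁻¹ := by
    rw [← div_eq_mul_inv, one_lt_div (by linarith)]
    linarith
  obtain ⟨M, hM⟩ := (hlim.eventually (lt_mem_nhds hgt)).exists
  refine ⟨M, hM.trans_le (sum_le_sum fun u _ => ?_)⟩
  rw [piTerm_of_x_eq_zero]
  gcongr
  exact hr.le.trans (min_le_left _ _)

theorem exists_one_lt_phi (hd : 1 < d) (hl0 : 0 < lam) (hl1 : lam < 1) :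
    ∃ x, 0 < x ∧ 1 < phi d lam x := by
  obtain ⟨M, hM⟩ := exists_sum_range_piTerm_zero_gt_one hd hl0 hl1
  have hcont : ContinuousWithinAt (fun x => ∑ u ∈ range M, piTerm d lam x u) (Set.Ioi 0) 0 :=
    ((continuousOn_finsetSum _ fun u _ => continuousOn_piTerm hd.le hl0 u) 0
      Set.self_mem_Ici).mono Set.Ioi_subset_Ici_self
  obtain ⟨x, hx1, hx0⟩ := ((hcont.eventually (lt_mem_nhds hM)).and self_mem_nhdsWithin).exists
  refine ⟨x, hx0, hx1.trans_le ?_⟩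
  exact (summable_piTerm hd hl0 hl1 hx0).sum_le_tsum _
    fun u _ => (piTerm_pos hd.le hl0 hl1 (le_of_lt hx0) u).le

end

theorem phi_eq_one_existsUnique (d : ℕ) (hd : 2 ≤ d) (lam : ℝ)
    (hl : lam ∈ Set.Ioo (0 : ℝ) 1) :
    ∃! x : ℝ, 0 < x ∧ phi d lam x = 1 := by
  obtain ⟨hl0, hl1⟩ := hl
  obtain ⟨a, ha0, ha⟩ := exists_one_lt_phi hd hl0 hl1
  set b := a + lam⁻¹
  have hab : a ≤ b := le_add_of_nonneg_right (inv_pos.2 hl0).le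
  have hb : phi d lam b < 1 := by
    refine phi_lt_one hd hl0 hl1 ?_
    rw [mul_add, mul_inv_cancel₀ hl0.ne']
    linarith [mul_pos hl0 ha0]
  obtain ⟨x, hx, hx1⟩ := intermediate_value_Icc' hab
    ((continuousOn_phi hd hl0 hl1 ha0).mono Set.Icc_subset_Ici_self) ⟨hb.le, ha.le⟩
  have hx0 : 0 < x := ha0.trans_le hx.1
  exact ⟨x, ⟨hx0, hx1⟩, fun y ⟨hy0, hy1⟩ =>
    (strictAntiOn_phi hd hl0 hl1).injOn hy0 hx0 (hy1.trans hx1.symm)⟩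
end

section
/- Let d ≥ 2 be an integer and λ ∈ ((4d−2)/(4d−1), 1). Let Q̄ > 0 satisfy Σ_{u=0}^∞ ∏_{v=1}^u dλ/(1 + v(d−1)λ/Q̄) = 1/(1−λ). Then Q̄ ≤ −log(1−λ)/c_d, where c_d = ((2d−3)/(2(d−1))) · log(4d/(4d−1)). -/
/-! Put `a = dλ`, `b = (d-1)λ/Q̄`, `c = (2d-1)/2`. Every factor `a / (1 + v b)` with
`v ≤ K := (c-1)/b` is at least `r := a/c = 2dλ/(2d-1) > 4d/(4d-1)`, so the first `⌊K⌋ + 1`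
terms of the series dominate a geometric sum with ratio `r`; summing it gives
`r ^ (⌊K⌋ + 1) ≤ (r - λ)/(1 - λ) ≤ 1/(1-λ)`, and `K < ⌊K⌋ + 1`. Taking logarithms,
`Q̄ c_d = λ K log(4d/(4d-1)) ≤ K log r ≤ -log(1-λ)`. -/

open Finset Real

theorem pow_le_one_add_mul_of_hasSum_prod {g : ℕ → ℝ} {r S : ℝ} {n : ℕ} (hg : ∀ v, 0 ≤ g v)
    (hr : 1 < r) (hgr : ∀ v ∈ Ico 1 n, r ≤ g v)
    (hS : HasSum (fun u => ∏ v ∈ Icc 1 u, g v) S) :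
    r ^ n ≤ 1 + (r - 1) * S := by
  have hprod : ∀ u ∈ range n, r ^ u ≤ ∏ v ∈ Icc 1 u, g v := fun u hu => by
    calc r ^ u = ∏ _v ∈ Icc 1 u, r := by simp
      _ ≤ ∏ v ∈ Icc 1 u, g v := prod_le_prod (fun _ _ => by positivity) fun v hv =>
          hgr v (by simp only [mem_Icc, mem_range, mem_Ico] at hv hu ⊢; omega)
  have hgeom : ∑ u ∈ range n, r ^ u ≤ S :=
    (sum_le_sum hprod).trans <|
      sum_le_hasSum _ (fun u _ => prod_nonneg fun v _ => hg v) hS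
  rw [geom_sum_eq hr.ne', div_le_iff₀ (by linarith)] at hgeom
  linarith

theorem div_le_div_one_add_mul {a b c x : ℝ} (ha : 0 ≤ a) (hb : 0 < b) (hx : 0 ≤ x)
    (hxc : x ≤ (c - 1) / b) : a / c ≤ a / (1 + x * b) := by
  rw [le_div_iff₀ hb] at hxc
  exact div_le_div_of_nonneg_left ha (by positivity) (by linarith)

theorem mul_log_le_log_of_hasSum_prod {a b c S : ℝ} (hb : 0 < b) (hc : 1 ≤ c) (hca : c < a)
    (hS : HasSum (fun u : ℕ => ∏ v ∈ Icc 1 u, a / (1 + v * b)) S) :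
    (c - 1) / b * log (a / c) ≤ log (1 + (a / c - 1) * S) := by
  set K := (c - 1) / b
  have hK : 0 ≤ K := div_nonneg (by linarith) hb.le
  have hr : 1 < a / c := (one_lt_div (by linarith)).2 hca
  have hpow : (a / c) ^ (⌊K⌋₊ + 1) ≤ 1 + (a / c - 1) * S := by
    refine pow_le_one_add_mul_of_hasSum_prod (fun v => div_nonneg (by linarith) (by positivity))
      hr (fun v hv => ?_) hS
    have hvK : (v : ℝ) ≤ K := (Nat.cast_le.2 (Nat.le_of_lt_succ (mem_Ico.1 hv).2)).trans
      (Nat.floor_le hK)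
    exact div_le_div_one_add_mul (by linarith) hb v.cast_nonneg hvK
  calc K * log (a / c) ≤ ((⌊K⌋₊ + 1 : ℕ) : ℝ) * log (a / c) := by
        gcongr
        · exact (log_pos hr).le
        · push_cast; exact (Nat.lt_floor_add_one K).le
    _ = log ((a / c) ^ (⌊K⌋₊ + 1)) := (log_pow _ _).symm
    _ ≤ log (1 + (a / c - 1) * S) := log_le_log (by positivity) hpow

theorem mul_log_le_neg_log_one_sub_of_hasSum_prod {a b c p : ℝ} (hb : 0 < b) (hc : 1 ≤ c)
    (hca : c < a) (hac : a ≤ c * (1 + p)) (hp : p < 1)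
    (hS : HasSum (fun u : ℕ => ∏ v ∈ Icc 1 u, a / (1 + v * b)) (1 / (1 - p))) :
    (c - 1) / b * log (a / c) ≤ -log (1 - p) := by
  have hp' : 0 < 1 - p := sub_pos.2 hp
  have hr : 1 < a / c := (one_lt_div (by linarith)).2 hca
  have hbound : 1 + (a / c - 1) * (1 / (1 - p)) ≤ 1 / (1 - p) := by
    rw [mul_one_div, ← sub_nonneg,
      show 1 / (1 - p) - (1 + (a / c - 1) / (1 - p)) = (1 + p - a / c) / (1 - p) by
        field_simp; ring]
    exact div_nonneg (by linarith [(div_le_iff₀' (by linarith)).2 hac]) hp'.le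
  calc (c - 1) / b * log (a / c) ≤ log (1 + (a / c - 1) * (1 / (1 - p))) :=
        mul_log_le_log_of_hasSum_prod hb hc hca hS
    _ ≤ log (1 / (1 - p)) := log_le_log (by nlinarith [one_div_pos.2 hp']) hbound
    _ = -log (1 - p) := by rw [one_div, log_inv]

theorem meanQueue_log_bound (d : ℕ) (hd : 2 ≤ d) (lam Q : ℝ)
    (hl : lam ∈ Set.Ioo ((4 * (d : ℝ) - 2) / (4 * (d : ℝ) - 1)) 1) (hQ : 0 < Q)
    (hfix : ∑' u : ℕ, ∏ v ∈ Finset.Icc 1 u,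
        ((d : ℝ) * lam) / (1 + (v : ℝ) * ((d : ℝ) - 1) * lam / Q) = 1 / (1 - lam)) :
    Q ≤ -Real.log (1 - lam) /
      (((2 * (d : ℝ) - 3) / (2 * ((d : ℝ) - 1))) * Real.log (4 * (d : ℝ) / (4 * (d : ℝ) - 1))) := by
  obtain ⟨hl₁, hl₂⟩ := hl
  have hd' : (2 : ℝ) ≤ d := by exact_mod_cast hd
  rw [div_lt_iff₀ (by linarith)] at hl₁
  have hlam : 0 < lam := by nlinarith
  have hS : HasSum (fun u : ℕ => ∏ v ∈ Icc 1 u, d * lam / (1 + v * ((d - 1) * lam / Q)))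
      (1 / (1 - lam)) := by
    simp only [← mul_div_assoc, ← mul_assoc]
    refine hfix ▸ (Summable.hasSum ?_)
    by_contra h
    linarith [tsum_eq_zero_of_not_summable h ▸ hfix, one_div_pos.2 (sub_pos.2 hl₂)]
  set K := ((2 * d - 1) / 2 - 1) / ((d - 1) * lam / Q)
  have key : K * log (d * lam / ((2 * d - 1) / 2)) ≤ -log (1 - lam) :=
    mul_log_le_neg_log_one_sub_of_hasSum_prod (div_pos (by nlinarith) hQ) (by linarith)
      (by nlinarith) (by nlinarith) hl₂ hS
  have hr : 4 * d / (4 * d - 1) ≤ d * lam / ((2 * d - 1) / 2) := by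
    rw [div_le_div_iff₀ (by linarith) (by linarith)]; nlinarith
  have hlog : 0 < log (4 * d / (4 * d - 1)) := log_pos <| (one_lt_div (by linarith)).2 (by linarith)
  have hK : 0 < K := div_pos (by linarith) (div_pos (by nlinarith) hQ)
  have hKlam : Q * ((2 * d - 3) / (2 * (d - 1))) = lam * K := by
    simp only [K]
    field_simp [show (d : ℝ) - 1 ≠ 0 by linarith]
    ring
  rw [le_div_iff₀ (mul_pos (div_pos (by linarith) (by linarith)) hlog)]
  calc Q * ((2 * d - 3) / (2 * (d - 1)) * log (4 * d / (4 * d - 1)))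
      = lam * (K * log (4 * d / (4 * d - 1))) := by rw [← mul_assoc, hKlam, mul_assoc]
    _ ≤ K * log (4 * d / (4 * d - 1)) := mul_le_of_le_one_left (by positivity) hl₂.le
    _ ≤ K * log (d * lam / ((2 * d - 1) / 2)) := by
        gcongr
        exact div_pos (by linarith) (by linarith)
    _ ≤ -log (1 - lam) := key
end

section
/- For an M/M/1 queue with arrival rate λ ∈ (0,1), service rate 1, and geometric stationary distribution π_u = (1−λ)λ^u on ℤ≥0, the mean queue length Σ_u u·π_u = λ/(1−λ), and λ/(1−λ) = Θ(1/(1−λ)) as λ → 1; in contrast, for any d ≥ 2 the mean of the distribution π_u = (1−λ)∏_{v=1}^u dλ/(1+vμ) with μ = (d−1)λ/Q̄ (Q̄ the fixed point) is Q̄ ≤ −log(1−λ)/c_d for λ close to 1. -/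
/-!
Put `γ = 4d/(4d-1)` and `α = (2d-3)/2`. While `v (d-1) λ / Q ≤ α`, i.e. for
`v ≤ t := α Q / ((d-1) λ)`, the factor `dλ / (1 + v (d-1) λ / Q)` is at least `γ`, because
`γ (1 + α) = 2d(2d-1)/(4d-1) < dλ` exactly when `λ > (4d-2)/(4d-1)`. Hence the first
`⌊t⌋ + 1` terms of the fixed-point series dominate a geometric sum, so
`γ ^ t < 1 + (γ - 1) / (1 - λ) ≤ 1 / (1 - λ)`, and taking logarithms gives
`c_d Q ≤ t log γ < -log (1 - λ)`.
-/

open Finset Real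

theorem tsum_nat_mul_geometric_distribution {𝕜 : Type*} [NormedField 𝕜] {r : 𝕜}
    (hr : ‖r‖ < 1) : ∑' u : ℕ, (u : 𝕜) * ((1 - r) * r ^ u) = r / (1 - r) := by
  have hr1 : 1 - r ≠ 0 := sub_ne_zero.mpr fun h => by simp [← h] at hr
  calc ∑' u : ℕ, (u : 𝕜) * ((1 - r) * r ^ u)
      = (1 - r) * ∑' u : ℕ, (u : 𝕜) * r ^ u := by
        rw [← tsum_mul_left]; exact tsum_congr fun u => by ring
    _ = r / (1 - r) := by
        rw [tsum_coe_mul_geometric_of_norm_lt_one hr]; field_simp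

theorem div_one_sub_mem_Icc_of_half_lt {r : ℝ} (hr : 1 / 2 < r) (hr1 : r < 1) :
    1 / 2 * (1 / (1 - r)) ≤ r / (1 - r) ∧ r / (1 - r) ≤ 1 * (1 / (1 - r)) := by
  have h : 0 < 1 - r := by linarith
  rw [mul_one_div, one_mul]
  exact ⟨div_le_div_of_nonneg_right hr.le h.le, div_le_div_of_nonneg_right hr1.le h.le⟩

theorem pow_card_le_prod_of_le {ι R : Type*} [CommSemiring R] [PartialOrder R] [IsOrderedRing R]
    {s : Finset ι} {g : ι → R} {a : R} (ha : 0 ≤ a) (hg : ∀ i ∈ s, a ≤ g i) :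
    a ^ s.card ≤ ∏ i ∈ s, g i := by
  simpa using prod_le_prod (fun _ _ => ha) hg

theorem rpow_lt_one_add_mul_of_geom_sum_le {γ t M : ℝ} (hγ : 1 < γ)
    (hsum : ∑ u ∈ range (⌊t⌋₊ + 1), γ ^ u ≤ M) : γ ^ t < 1 + (γ - 1) * M := by
  have hγ1 : 0 < γ - 1 := by linarith
  rw [geom_sum_eq hγ.ne', div_le_iff₀ hγ1] at hsum
  calc γ ^ t < γ ^ ((⌊t⌋₊ + 1 : ℕ) : ℝ) := by
        apply Real.rpow_lt_rpow_of_exponent_lt hγ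
        exact_mod_cast Nat.lt_floor_add_one t
    _ ≤ 1 + (γ - 1) * M := by rw [Real.rpow_natCast]; linarith

theorem le_div_one_add_of_le {D lam x : ℝ} (hD : 1 / 4 < D)
    (hlam : (4 * D - 2) / (4 * D - 1) < lam) (hx0 : 0 ≤ x) (hx : x ≤ (2 * D - 3) / 2) :
    4 * D / (4 * D - 1) ≤ D * lam / (1 + x) := by
  have hden : 0 < 4 * D - 1 := by linarith
  rw [div_lt_iff₀ hden] at hlam
  rw [div_le_div_iff₀ hden (by linarith)]
  nlinarith

theorem geom_sum_le_of_tsum_prod_eq {D lam Q : ℝ} (hD : 3 / 2 < D)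
    (hlb : (4 * D - 2) / (4 * D - 1) < lam) (hub : lam < 1) (hQ : 0 < Q)
    (hsum : ∑' u : ℕ, ∏ v ∈ Icc 1 u, D * lam / (1 + (v : ℝ) * (D - 1) * lam / Q)
      = 1 / (1 - lam)) :
    ∑ u ∈ range (⌊(2 * D - 3) / 2 * Q / ((D - 1) * lam)⌋₊ + 1), (4 * D / (4 * D - 1)) ^ u
      ≤ 1 / (1 - lam) := by
  have hD1 : 0 < D - 1 := by linarith
  have hden : 0 < 4 * D - 1 := by linarith
  have hα : 0 < (2 * D - 3) / 2 := by linarith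
  have hlam0 : 0 < lam := lt_trans (div_pos (by linarith) hden) hlb
  set t := (2 * D - 3) / 2 * Q / ((D - 1) * lam) with ht
  have hsummable : Summable fun u : ℕ =>
      ∏ v ∈ Icc 1 u, D * lam / (1 + (v : ℝ) * (D - 1) * lam / Q) := by
    by_contra h
    rw [tsum_eq_zero_of_not_summable h] at hsum
    exact (one_div_pos.mpr (sub_pos.mpr hub)).ne hsum
  have hfactor : ∀ v : ℕ, v ≤ ⌊t⌋₊ →
      4 * D / (4 * D - 1) ≤ D * lam / (1 + (v : ℝ) * (D - 1) * lam / Q) := by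
    intro v hv
    have hvt : (v : ℝ) ≤ t := (Nat.cast_le.mpr hv).trans (Nat.floor_le (by positivity))
    refine le_div_one_add_of_le (by linarith) hlb (by positivity) ?_
    rw [div_le_iff₀ hQ]
    rw [ht, le_div_iff₀ (by positivity)] at hvt
    linarith
  rw [← hsum]
  refine (sum_le_sum fun u hu => ?_).trans (hsummable.sum_le_tsum _ fun u _ => by positivity)
  simpa using pow_card_le_prod_of_le (s := Icc 1 u) (by positivity) fun v hv =>
    hfactor v ((mem_Icc.mp hv).2.trans (Nat.lt_succ_iff.mp (mem_range.mp hu)))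

theorem le_neg_log_one_sub_div_of_tsum_eq {D lam Q : ℝ} (hD : 3 / 2 < D)
    (hlam : lam ∈ Set.Ioo ((4 * D - 2) / (4 * D - 1)) 1) (hQ : 0 < Q)
    (hsum : ∑' u : ℕ, ∏ v ∈ Icc 1 u, D * lam / (1 + (v : ℝ) * (D - 1) * lam / Q)
      = 1 / (1 - lam)) :
    Q ≤ -log (1 - lam) / ((2 * D - 3) / (2 * (D - 1)) * log (4 * D / (4 * D - 1))) := by
  obtain ⟨hlb, hub⟩ := hlam
  have hden : 0 < 4 * D - 1 := by linarith
  have hD1 : 0 < D - 1 := by linarith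
  have hα : 0 < (2 * D - 3) / 2 := by linarith
  have hlam0 : 0 < lam := lt_trans (div_pos (by linarith) hden) hlb
  have h1lam : 0 < 1 - lam := by linarith
  set γ := 4 * D / (4 * D - 1) with hγdef
  have hγ : 1 < γ := by rw [lt_div_iff₀ hden]; linarith
  set t := (2 * D - 3) / 2 * Q / ((D - 1) * lam)
  -- `1 + (γ - 1) M ≤ M` for `M = 1/(1-λ)` is where `λ ≥ 1/(4d-1)` is needed.
  have hγt : γ ^ t < 1 / (1 - lam) := by
    refine (rpow_lt_one_add_mul_of_geom_sum_le hγ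
      (geom_sum_le_of_tsum_prod_eq hD hlb hub hQ hsum)).trans_le ?_
    rw [hγdef]
    rw [div_lt_iff₀ hden] at hlb
    field_simp
    nlinarith
  have hc : 0 < (2 * D - 3) / (2 * (D - 1)) * log γ :=
    mul_pos (div_pos (by linarith) (by linarith)) (log_pos hγ)
  rw [le_div_iff₀ hc]
  calc Q * ((2 * D - 3) / (2 * (D - 1)) * log γ)
      = (2 * D - 3) / 2 * Q / (D - 1) * log γ := by field_simp
    _ ≤ t * log γ := by
        gcongr
        · exact (log_pos hγ).le
        · exact div_le_div_of_nonneg_left (by positivity) (by positivity) (by nlinarith)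
    _ = log (γ ^ t) := (log_rpow (by positivity) t).symm
    _ ≤ -log (1 - lam) := by
        rw [← log_inv, inv_eq_one_div]
        exact (log_lt_log (by positivity) hγt).le

/-- Contrast between the `M/M/1` mean queue length `λ/(1−λ) = Θ(1/(1−λ))` as `λ → 1`
and the logarithmic bound `Q̄ ≤ −log(1−λ)/c_d` for the mean-field fixed point with `d ≥ 2`. -/
theorem mm1_vs_parallel_mean (d : ℕ) (hd : 2 ≤ d) :
    (∀ lam : ℝ, lam ∈ Set.Ioo (0 : ℝ) 1 →
      ∑' u : ℕ, (u : ℝ) * ((1 - lam) * lam ^ u) = lam / (1 - lam)) ∧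
    (∃ c₁ c₂ : ℝ, 0 < c₁ ∧ 0 < c₂ ∧ ∃ lam₀ ∈ Set.Ico (0 : ℝ) 1,
      ∀ lam ∈ Set.Ioo lam₀ 1,
        c₁ * (1 / (1 - lam)) ≤ lam / (1 - lam) ∧ lam / (1 - lam) ≤ c₂ * (1 / (1 - lam))) ∧
    (∀ lam Q : ℝ, lam ∈ Set.Ioo ((4 * (d : ℝ) - 2) / (4 * (d : ℝ) - 1)) 1 → 0 < Q →
      (∑' u : ℕ, ∏ v ∈ Finset.Icc 1 u,
          ((d : ℝ) * lam) / (1 + (v : ℝ) * ((d : ℝ) - 1) * lam / Q)) = 1 / (1 - lam) →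
      Q ≤ -Real.log (1 - lam) /
        (((2 * (d : ℝ) - 3) / (2 * ((d : ℝ) - 1))) *
          Real.log (4 * (d : ℝ) / (4 * (d : ℝ) - 1)))) := by
  have hd2 : (2 : ℝ) ≤ d := by exact_mod_cast hd
  refine ⟨fun lam ⟨h0, h1⟩ => tsum_nat_mul_geometric_distribution
      (by rw [Real.norm_eq_abs, abs_lt]; constructor <;> linarith),
    ⟨1 / 2, 1, by norm_num, by norm_num, 1 / 2, ⟨by norm_num, by norm_num⟩,
      fun lam ⟨h0, h1⟩ => div_one_sub_mem_Icc_of_half_lt h0 h1⟩,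
    fun lam Q hlam hQ hsum => le_neg_log_one_sub_div_of_tsum_eq (by linarith) hlam hQ hsum⟩
end

section
/- Let n ≥ d ≥ 1, m = C(n,d), λ ∈ (0,1), and consider the function Ψ(x) = Σ_{j∈[n]} q_j² on ℤ≥0^m where q_j = Σ_{i: j∈i} x_i. For the Markov generator G with transitions x → x+e_i at rate nλ/m and x → x−e_i at rate x_i Σ_{j∈i} 1/q_j (for x_i ≥ 1), one has G Ψ(x) ≤ 2d(λ−1)Σ_{j∈[n]} q_j + d(nλ + B(x)), where B(x) = |{j : q_j > 0}|. -/
/-!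
A departure from class `i` changes `Ψ` by `Σ_{j∈i} (1 - 2 q_j)`, an arrival by
`Σ_{j∈i} (2 q_j + 1)`. Weighting the departure term by `x_i Σ_{j∈i} 1/q_j` and using the
harmonic–arithmetic mean inequality `(Σ_{j∈i} 1/q_j)(Σ_{j∈i} q_j) ≥ d²` bounds it by
`d x_i Σ_{j∈i} 1/q_j - 2d² x_i`. Summing over classes and exchanging the order of summation,
`Σ_i x_i Σ_{j∈i} 1/q_j = Σ_j q_j / q_j = B(x)` and `d Σ_i x_i = Σ_j q_j`, while every server lies
in `C(n-1, d-1) = d m / n` classes, which turns the arrival terms into `dλ(2 Σ_j q_j + n)`.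
-/

open scoped BigOperators

/-- Classes are the `d`-element subsets of `[n]`. -/
def classes (n d : ℕ) : Finset (Finset (Fin n)) :=
  Finset.univ.filter (fun i : Finset (Fin n) => i.card = d)

/-- `q_j(x) = Σ_{i : j ∈ i} x_i`, the queue length at server `j` in state `x`. -/
def queueLen (n d : ℕ) (x : Finset (Fin n) → ℕ) (j : Fin n) : ℕ :=
  ∑ i ∈ (classes n d).filter (fun i => j ∈ i), x i

/-- The quadratic Lyapunov function `Ψ(x) = Σ_j q_j²`. -/
noncomputable def lyap (n d : ℕ) (x : Finset (Fin n) → ℕ) : ℝ :=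
  ∑ j : Fin n, ((queueLen n d x j : ℝ)) ^ 2

/-- The number of busy servers `B(x)`. -/
def busy (n d : ℕ) (x : Finset (Fin n) → ℕ) : ℕ :=
  (Finset.univ.filter (fun j : Fin n => 0 < queueLen n d x j)).card

/-- The generator applied to `Ψ`: arrivals at rate `nλ/m` per class,
departures at rate `x_i Σ_{j∈i} 1/q_j`. -/
noncomputable def genLyap (n d : ℕ) (lam : ℝ) (x : Finset (Fin n) → ℕ) : ℝ :=
  ∑ i ∈ classes n d,
    (((n : ℝ) * lam / (n.choose d : ℝ)) *
        (lyap n d (Function.update x i (x i + 1)) - lyap n d x) +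
      (x i : ℝ) * (∑ j ∈ i, 1 / (queueLen n d x j : ℝ)) *
        (lyap n d (Function.update x i (x i - 1)) - lyap n d x))

open Finset Function

theorem Finset.sq_card_le_sum_one_div_mul_sum {ι : Type*} (s : Finset ι) {q : ι → ℝ}
    (hq : ∀ j ∈ s, 0 < q j) : (#s : ℝ) ^ 2 ≤ (∑ j ∈ s, 1 / q j) * ∑ j ∈ s, q j := by
  simpa using sum_sq_le_sum_mul_sum_of_sq_le_mul s (r := fun _ => (1 : ℝ))
    (fun j hj => (one_div_pos.2 (hq j hj)).le) (fun j hj => (hq j hj).le)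
    (fun j hj => by rw [one_div_mul_cancel (hq j hj).ne', one_pow])

theorem Finset.sum_sum_mem_eq_sum_sum_filter {α M : Type*} [Fintype α] [DecidableEq α]
    [AddCommMonoid M] (C : Finset (Finset α)) (g : Finset α → α → M) :
    ∑ i ∈ C, ∑ j ∈ i, g i j = ∑ j, ∑ i ∈ C with j ∈ i, g i j :=
  sum_comm' (by simp)

theorem Nat.mul_choose_sub_one_sub_one (n : ℕ) {d : ℕ} (hd : d ≠ 0) :
    n * (n - 1).choose (d - 1) = d * n.choose d := by
  obtain ⟨D, rfl⟩ := Nat.exists_eq_succ_of_ne_zero hd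
  cases n with
  | zero => simp
  | succ N => simpa [mul_comm] using Nat.add_one_mul_choose_eq N D

section Classes

variable {n d : ℕ}

theorem mem_classes {i : Finset (Fin n)} : i ∈ classes n d ↔ #i = d := by
  simp [classes]

theorem card_classes_filter_mem (hd : 1 ≤ d) (j : Fin n) :
    #{i ∈ classes n d | j ∈ i} = (n - 1).choose (d - 1) := by
  have h := card_filter_powersetCard_subset {j} univ d (subset_univ _) (by simpa using hd)
  rw [card_singleton, card_univ, Fintype.card_fin] at h
  rw [← h]
  congr 1
  ext i
  simp [mem_classes]

theorem sum_classes_sum_mem (hd : 1 ≤ d) (f : Fin n → ℝ) :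
    ∑ i ∈ classes n d, ∑ j ∈ i, f j = (n - 1).choose (d - 1) * ∑ j, f j := by
  rw [sum_sum_mem_eq_sum_sum_filter, mul_sum]
  simp [card_classes_filter_mem hd]

end Classes

section QueueLen

variable {n d : ℕ} (x : Finset (Fin n) → ℕ) {i : Finset (Fin n)}

theorem le_queueLen (hi : i ∈ classes n d) {j : Fin n} (hj : j ∈ i) :
    x i ≤ queueLen n d x j :=
  single_le_sum (fun _ _ => Nat.zero_le _) (mem_filter.2 ⟨hi, hj⟩)

theorem sum_queueLen : ∑ j, queueLen n d x j = d * ∑ i ∈ classes n d, x i := by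
  simp only [queueLen, ← sum_sum_mem_eq_sum_sum_filter (classes n d) (fun i _ => x i),
    sum_const, smul_eq_mul, mul_sum]
  exact sum_congr rfl fun i hi => by rw [mem_classes.1 hi]

theorem queueLen_update (hi : i ∈ classes n d) (v : ℕ) (j : Fin n) :
    (queueLen n d (update x i v) j : ℝ) =
      queueLen n d x j + if j ∈ i then (v : ℝ) - x i else 0 := by
  unfold queueLen
  split_ifs with hj
  · have hmem : i ∈ {i ∈ classes n d | j ∈ i} := mem_filter.2 ⟨hi, hj⟩
    rw [sum_update_of_mem hmem, sum_eq_add_sum_sdiff_singleton_of_mem hmem]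
    push_cast
    ring
  · have hnmem : i ∉ {i ∈ classes n d | j ∈ i} := fun h => hj (mem_filter.1 h).2
    rw [sum_update_of_notMem hnmem, add_zero]

theorem lyap_update_sub_lyap (hi : i ∈ classes n d) (v : ℕ) :
    lyap n d (update x i v) - lyap n d x =
      ∑ j ∈ i, ((v : ℝ) - x i) * (2 * queueLen n d x j + ((v : ℝ) - x i)) := by
  calc lyap n d (update x i v) - lyap n d x
      = ∑ j, if j ∈ i then ((v : ℝ) - x i) * (2 * queueLen n d x j + ((v : ℝ) - x i)) else 0 := by
        rw [lyap, lyap, ← sum_sub_distrib]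
        refine sum_congr rfl fun j _ => ?_
        rw [queueLen_update x hi]
        split_ifs <;> ring
    _ = _ := by rw [sum_ite_mem, univ_inter]

theorem sum_mul_sum_one_div_queueLen :
    ∑ i ∈ classes n d, (x i : ℝ) * ∑ j ∈ i, 1 / (queueLen n d x j : ℝ) = busy n d x := by
  calc ∑ i ∈ classes n d, (x i : ℝ) * ∑ j ∈ i, 1 / (queueLen n d x j : ℝ)
      = ∑ j, ∑ i ∈ classes n d with j ∈ i, (x i : ℝ) / queueLen n d x j := by
        simp only [mul_sum, mul_one_div, sum_sum_mem_eq_sum_sum_filter]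
    _ = ∑ j, (queueLen n d x j : ℝ) / queueLen n d x j := by
        simp only [← sum_div, queueLen, Nat.cast_sum]
    _ = busy n d x := by
        rw [busy, card_filter, Nat.cast_sum]
        refine sum_congr rfl fun j _ => ?_
        rcases (queueLen n d x j).eq_zero_or_pos with h | h
        · simp [h]
        · simp [h, h.ne']

theorem arrival_term_eq (hi : i ∈ classes n d) :
    lyap n d (update x i (x i + 1)) - lyap n d x = ∑ j ∈ i, (2 * (queueLen n d x j : ℝ) + 1) := by
  rw [lyap_update_sub_lyap x hi]
  push_cast
  simp

theorem departure_term_le (hi : i ∈ classes n d) :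
    (x i : ℝ) * (∑ j ∈ i, 1 / (queueLen n d x j : ℝ)) *
        (lyap n d (update x i (x i - 1)) - lyap n d x) ≤
      d * ((x i : ℝ) * ∑ j ∈ i, 1 / (queueLen n d x j : ℝ)) - 2 * d * (d * x i) := by
  rcases (x i).eq_zero_or_pos with h0 | hpos
  · simp [h0]
  have hq : ∀ j ∈ i, (0 : ℝ) < queueLen n d x j := fun j hj =>
    Nat.cast_pos.2 (hpos.trans_le (le_queueLen x hi hj))
  have hHM := sq_card_le_sum_one_div_mul_sum i hq
  have hdiff : lyap n d (update x i (x i - 1)) - lyap n d x =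
      d - 2 * ∑ j ∈ i, (queueLen n d x j : ℝ) := by
    rw [lyap_update_sub_lyap x hi, Nat.cast_sub hpos]
    simp [sub_eq_add_neg, sum_add_distrib, mul_sum, mem_classes.1 hi]
  have hcard : (#i : ℝ) = d := by rw [mem_classes.1 hi]
  rw [hcard] at hHM
  rw [hdiff]
  nlinarith [mul_le_mul_of_nonneg_left hHM (Nat.cast_nonneg (x i) : (0 : ℝ) ≤ x i)]

theorem arrival_drift_eq (hd : 1 ≤ d) (hdn : d ≤ n) (lam : ℝ) :
    (n * lam / n.choose d) * ∑ i ∈ classes n d, ∑ j ∈ i, (2 * (queueLen n d x j : ℝ) + 1) =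
      d * lam * (2 * ∑ j, (queueLen n d x j : ℝ) + n) := by
  have hm : (n.choose d : ℝ) ≠ 0 := Nat.cast_ne_zero.2 (Nat.choose_pos hdn).ne'
  have hdeg : (n : ℝ) * (n - 1).choose (d - 1) = d * n.choose d := by
    exact_mod_cast Nat.mul_choose_sub_one_sub_one n (by omega)
  rw [sum_classes_sum_mem hd, sum_add_distrib, ← mul_sum]
  field_simp
  simp only [sum_const, card_univ, Fintype.card_fin, nsmul_eq_mul, mul_one]
  linear_combination (lam * (2 * ∑ j, (queueLen n d x j : ℝ) + n)) * hdeg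

end QueueLen

theorem genLyap_drift_bound_general (n d : ℕ) (hd : 1 ≤ d) (hdn : d ≤ n) (lam : ℝ)
    (x : Finset (Fin n) → ℕ) :
    genLyap n d lam x ≤
      2 * (d : ℝ) * (lam - 1) * (∑ j : Fin n, (queueLen n d x j : ℝ)) +
        (d : ℝ) * ((n : ℝ) * lam + (busy n d x : ℝ)) := by
  have hsum : (∑ j, (queueLen n d x j : ℝ)) = d * ∑ i ∈ classes n d, (x i : ℝ) := by
    exact_mod_cast sum_queueLen x
  calc genLyap n d lam x
      ≤ ∑ i ∈ classes n d, ((n * lam / n.choose d) * ∑ j ∈ i, (2 * (queueLen n d x j : ℝ) + 1) +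
          (d * ((x i : ℝ) * ∑ j ∈ i, 1 / (queueLen n d x j : ℝ)) - 2 * d * (d * x i))) :=
        sum_le_sum fun i hi => by
          rw [arrival_term_eq x hi]
          exact (add_le_add_iff_left _).2 (departure_term_le x hi)
    _ = d * lam * (2 * ∑ j, (queueLen n d x j : ℝ) + n) +
          (d * busy n d x - 2 * d * (d * ∑ i ∈ classes n d, (x i : ℝ))) := by
      rw [sum_add_distrib, sum_sub_distrib, ← mul_sum, ← mul_sum, ← mul_sum, ← mul_sum,
        arrival_drift_eq x hd hdn, sum_mul_sum_one_div_queueLen]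
    _ = _ := by rw [← hsum]; ring

/-- Drift bound: `GΨ(x) ≤ 2d(λ−1)Σ_j q_j + d(nλ + B(x))`. -/
theorem genLyap_drift_bound (n d : ℕ) (hd : 1 ≤ d) (hdn : d ≤ n) (lam : ℝ)
    (hl : lam ∈ Set.Ioo (0 : ℝ) 1) (x : Finset (Fin n) → ℕ) :
    genLyap n d lam x ≤
      2 * (d : ℝ) * (lam - 1) * (∑ j : Fin n, (queueLen n d x j : ℝ)) +
        (d : ℝ) * ((n : ℝ) * lam + (busy n d x : ℝ)) :=
  genLyap_drift_bound_general n d hd hdn lam x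
end

section
/- Let H = (V,E) be a d-uniform hypergraph and let k* be the largest k such that the k-core of H is non-empty. Then the optimal makespan W_max(H) of the fractional scheduling LP satisfies k*/d ≤ W_max(H) ≤ k*. -/
/-!
Peeling the hypergraph one vertex of minimum induced degree at a time (there is always one of
degree `≤ k*`, since the `(k* + 1)`-core is empty) and charging each edge to the first of its
vertices to be removed orients every edge towards one of its ends with in-degree `≤ k*`
everywhere; capacity `1/k*` along each orientation is a feasible allocation.
Conversely, inside the `k*`-core `U` double counting gives `k* |U| ≤ d |E(U)|`, while the edges
of `E(U)` receive total capacity at most `|U|`, so one of them receives at most `d/k*`.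
-/

open Finset

section Hypergraph

variable {V E : Type*} [Fintype E] [DecidableEq V] (ends : E → Finset V)

def edgesWithin (U : Finset V) : Finset E := {e | ends e ⊆ U}

def degreeWithin (U : Finset V) (v : V) : ℕ := #{e | v ∈ ends e ∧ ends e ⊆ U}

def HasNonemptyCore (k : ℕ) : Prop :=
  ∃ U : Finset V, U.Nonempty ∧ ∀ v ∈ U, k ≤ degreeWithin ends U v

section Peeling

variable {ends} {k : ℕ}

theorem edgesWithin_empty (hne : ∀ e, (ends e).Nonempty) : edgesWithin ends ∅ = ∅ := by
  simp [edgesWithin, Finset.subset_empty, Finset.nonempty_iff_ne_empty.mp (hne _)]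

theorem exists_orientation_within (hne : ∀ e, (ends e).Nonempty)
    (hdegen : ∀ U : Finset V, U.Nonempty → ∃ v ∈ U, degreeWithin ends U v ≤ k) (S : Finset V) :
    ∃ g : E → V, (∀ e, g e ∈ ends e) ∧ ∀ w, #{e ∈ edgesWithin ends S | g e = w} ≤ k := by
  induction S using Finset.strongInduction with
  | _ S ih =>
    obtain rfl | hS := S.eq_empty_or_nonempty
    · have hempty := edgesWithin_empty hne
      choose g hg using hne
      exact ⟨g, hg, fun w => by simp [hempty]⟩
    obtain ⟨v, hvS, hv⟩ := hdegen S hS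
    obtain ⟨g', hg'ends, hg'fib⟩ := ih (S.erase v) (Finset.erase_ssubset hvS)
    refine ⟨fun e => if v ∈ ends e ∧ ends e ⊆ S then v else g' e, ?_, fun w => ?_⟩
    · intro e
      dsimp only
      split_ifs with h
      exacts [h.1, hg'ends e]
    by_cases hw : w = v
    · subst hw
      refine (Finset.card_le_card fun e he => ?_).trans hv
      simp only [edgesWithin, Finset.mem_filter, Finset.mem_univ, true_and] at he ⊢
      split_ifs at he with h
      exacts [h, ⟨he.2 ▸ hg'ends e, he.1⟩]
    · refine (Finset.card_le_card fun e he => ?_).trans (hg'fib w)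
      simp only [edgesWithin, Finset.mem_filter, Finset.mem_univ, true_and] at he ⊢
      split_ifs at he with h
      · exact absurd he.2.symm hw
      · exact ⟨Finset.subset_erase.mpr ⟨he.1, fun hv => h ⟨hv, he.1⟩⟩, he.2⟩

theorem exists_orientation_of_not_hasNonemptyCore [Fintype V] (hne : ∀ e, (ends e).Nonempty)
    (hcore : ¬ HasNonemptyCore ends (k + 1)) :
    ∃ g : E → V, (∀ e, g e ∈ ends e) ∧ ∀ w, #{e | g e = w} ≤ k := by
  have hdegen : ∀ U : Finset V, U.Nonempty → ∃ v ∈ U, degreeWithin ends U v ≤ k := by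
    simpa [HasNonemptyCore, Nat.lt_succ_iff] using hcore
  obtain ⟨g, hg, hfib⟩ := exists_orientation_within hne hdegen Finset.univ
  exact ⟨g, hg, by simpa [edgesWithin] using hfib⟩

end Peeling

theorem exists_allocation_of_orientation {k : ℕ} (g : E → V) (hg : ∀ e, g e ∈ ends e)
    (hfib : ∀ w, #{e | g e = w} ≤ k) :
    ∃ x : V → E → ℝ, (∀ v e, 0 ≤ x v e) ∧ (∀ v e, v ∉ ends e → x v e = 0) ∧
      (∀ v, ∑ e, x v e ≤ 1) ∧ ∀ e, (1 : ℝ) / k ≤ ∑ v ∈ ends e, x v e := by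
  refine ⟨fun v e => if g e = v then 1 / k else 0, fun v e => by positivity, ?_, ?_, ?_⟩
  · intro v e hv
    simp [show g e ≠ v from fun h => hv (h ▸ hg e)]
  · intro v
    rw [← Finset.sum_filter, Finset.sum_const, nsmul_eq_mul, mul_one_div]
    exact div_le_one_of_le₀ (by exact_mod_cast hfib v) k.cast_nonneg
  · intro e
    simpa using Finset.single_le_sum (f := fun v => if g e = v then (1 : ℝ) / k else 0)
      (fun v _ => by positivity) (hg e)

section Core

variable {ends}

theorem sum_degreeWithin_eq (U : Finset V) :
    ∑ v ∈ U, degreeWithin ends U v = ∑ e ∈ edgesWithin ends U, #(ends e) := by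
  have hdc := Finset.sum_card_bipartiteAbove_eq_sum_card_bipartiteBelow
    (s := U) (t := edgesWithin ends U) (r := fun v e => v ∈ ends e)
  refine (Finset.sum_congr rfl fun v _ => ?_).trans (hdc.trans (Finset.sum_congr rfl fun e he => ?_))
  · simp only [degreeWithin, Finset.bipartiteAbove, edgesWithin, Finset.filter_filter, and_comm]
  · have hsub : ends e ⊆ U := (Finset.mem_filter.mp he).2
    simp only [Finset.bipartiteBelow, Finset.filter_mem_eq_inter, Finset.inter_eq_right.mpr hsub]

theorem mul_card_le_mul_card_edgesWithin {d k : ℕ} (hunif : ∀ e, #(ends e) = d) {U : Finset V}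
    (hdeg : ∀ v ∈ U, k ≤ degreeWithin ends U v) :
    k * #U ≤ d * #(edgesWithin ends U) :=
  calc k * #U = ∑ _v ∈ U, k := by rw [Finset.sum_const, smul_eq_mul, mul_comm]
    _ ≤ ∑ v ∈ U, degreeWithin ends U v := Finset.sum_le_sum hdeg
    _ = ∑ _e ∈ edgesWithin ends U, d := by rw [sum_degreeWithin_eq]; simp only [hunif]
    _ = d * #(edgesWithin ends U) := by rw [Finset.sum_const, smul_eq_mul, mul_comm]

theorem sum_load_edgesWithin_le_card {x : V → E → ℝ} (hx0 : ∀ v e, 0 ≤ x v e)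
    (hx1 : ∀ v, ∑ e, x v e ≤ 1) (U : Finset V) :
    ∑ e ∈ edgesWithin ends U, ∑ v ∈ ends e, x v e ≤ #U :=
  calc ∑ e ∈ edgesWithin ends U, ∑ v ∈ ends e, x v e
      ≤ ∑ e ∈ edgesWithin ends U, ∑ v ∈ U, x v e :=
        Finset.sum_le_sum fun e he => Finset.sum_le_sum_of_subset_of_nonneg
          (Finset.mem_filter.mp he).2 fun v _ _ => hx0 v e
    _ = ∑ v ∈ U, ∑ e ∈ edgesWithin ends U, x v e := Finset.sum_comm
    _ ≤ ∑ v ∈ U, ∑ e, x v e := Finset.sum_le_sum fun v _ =>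
        Finset.sum_le_sum_of_subset_of_nonneg (Finset.subset_univ _) fun e _ _ => hx0 v e
    _ ≤ ∑ _v ∈ U, 1 := Finset.sum_le_sum fun v _ => hx1 v
    _ = #U := by simp

theorem exists_load_le_of_hasNonemptyCore {d k : ℕ} (hunif : ∀ e, #(ends e) = d) (hk : 0 < k)
    (hcore : HasNonemptyCore ends k) {x : V → E → ℝ} (hx0 : ∀ v e, 0 ≤ x v e)
    (hx1 : ∀ v, ∑ e, x v e ≤ 1) :
    ∃ e, ∑ v ∈ ends e, x v e ≤ (d : ℝ) / k := by
  obtain ⟨U, hU, hdeg⟩ := hcore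
  have hcount := mul_card_le_mul_card_edgesWithin hunif hdeg
  have hedges : (edgesWithin ends U).Nonempty := by
    rw [← Finset.card_pos]
    exact Nat.pos_of_mul_pos_left ((Nat.mul_pos hk hU.card_pos).trans_le hcount)
  have hk' : (0 : ℝ) < k := by exact_mod_cast hk
  have hload : ∑ e ∈ edgesWithin ends U, ∑ v ∈ ends e, x v e
      ≤ ∑ _e ∈ edgesWithin ends U, (d : ℝ) / k := by
    rw [Finset.sum_const, nsmul_eq_mul, mul_div_assoc', le_div_iff₀ hk']
    refine (mul_le_mul_of_nonneg_right (sum_load_edgesWithin_le_card hx0 hx1 U) hk'.le).trans ?_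
    rw [mul_comm, mul_comm _ (d : ℝ)]
    exact_mod_cast hcount
  obtain ⟨e, -, he⟩ := Finset.exists_le_of_sum_le hedges hload
  exact ⟨e, he⟩

end Core

end Hypergraph

/-- A `k`-core is witnessed by a non-empty vertex set `U` in which every vertex has degree `≥ k`
in the subhypergraph induced by `U`. `W_max ≤ k*` is expressed by a feasible allocation giving
every hyperedge total capacity `≥ 1/k*`, and `W_max ≥ k*/d` by every feasible allocation leaving
some hyperedge with total capacity `≤ d/k*`. -/
theorem makespan_core_bounds_general (V E : Type*) [Fintype V] [Fintype E] [DecidableEq V]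
    (d : ℕ) (hd : 1 ≤ d) (ends : E → Finset V)
    (hunif : ∀ e : E, (ends e).card = d)
    (kstar : ℕ) (hk : 1 ≤ kstar)
    (hcore : ∃ U : Finset V, U.Nonempty ∧ ∀ v ∈ U,
      kstar ≤ (Finset.univ.filter (fun e : E => v ∈ ends e ∧ ends e ⊆ U)).card)
    (hnocore : ¬ ∃ U : Finset V, U.Nonempty ∧ ∀ v ∈ U,
      kstar + 1 ≤ (Finset.univ.filter (fun e : E => v ∈ ends e ∧ ends e ⊆ U)).card) :
    (∃ x : V → E → ℝ, (∀ v e, 0 ≤ x v e) ∧ (∀ v e, v ∉ ends e → x v e = 0) ∧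
      (∀ v, ∑ e : E, x v e ≤ 1) ∧ ∀ e : E, (1 : ℝ) / kstar ≤ ∑ v ∈ ends e, x v e) ∧
    (∀ x : V → E → ℝ, (∀ v e, 0 ≤ x v e) → (∀ v e, v ∉ ends e → x v e = 0) →
      (∀ v, ∑ e : E, x v e ≤ 1) → ∃ e : E, ∑ v ∈ ends e, x v e ≤ (d : ℝ) / kstar) := by
  have hne : ∀ e, (ends e).Nonempty := fun e => Finset.card_pos.mp (hunif e ▸ hd)
  obtain ⟨g, hg, hfib⟩ := exists_orientation_of_not_hasNonemptyCore hne hnocore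
  exact ⟨exists_allocation_of_orientation ends g hg hfib,
    fun x hx0 _ hx1 => exists_load_le_of_hasNonemptyCore hunif hk hcore hx0 hx1⟩

/-- Bounds on the optimal makespan of the fractional scheduling LP in terms of the largest
`k` with non-empty `k`-core.  A `k`-core is witnessed by a non-empty vertex set `U` in which
every vertex has degree `≥ k` in the subhypergraph induced by `U`.
The upper bound `W_max ≤ k*` is expressed by the existence of a feasible allocation giving
every hyperedge total capacity `≥ 1/k*`; the lower bound `W_max ≥ k*/d` by the fact that
every feasible allocation leaves some hyperedge with total capacity `≤ d/k*`. -/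
theorem makespan_core_bounds (V E : Type*) [Fintype V] [Fintype E] [DecidableEq V]
    [Nonempty E] (d : ℕ) (hd : 1 ≤ d) (ends : E → Finset V)
    (hunif : ∀ e : E, (ends e).card = d)
    (kstar : ℕ) (hk : 1 ≤ kstar)
    (hcore : ∃ U : Finset V, U.Nonempty ∧ ∀ v ∈ U,
      kstar ≤ (Finset.univ.filter (fun e : E => v ∈ ends e ∧ ends e ⊆ U)).card)
    (hnocore : ¬ ∃ U : Finset V, U.Nonempty ∧ ∀ v ∈ U,
      kstar + 1 ≤ (Finset.univ.filter (fun e : E => v ∈ ends e ∧ ends e ⊆ U)).card) :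
    (∃ x : V → E → ℝ, (∀ v e, 0 ≤ x v e) ∧ (∀ v e, v ∉ ends e → x v e = 0) ∧
      (∀ v, ∑ e : E, x v e ≤ 1) ∧ ∀ e : E, (1 : ℝ) / kstar ≤ ∑ v ∈ ends e, x v e) ∧
    (∀ x : V → E → ℝ, (∀ v e, 0 ≤ x v e) → (∀ v e, v ∉ ends e → x v e = 0) →
      (∀ v, ∑ e : E, x v e ≤ 1) → ∃ e : E, ∑ v ∈ ends e, x v e ≤ (d : ℝ) / kstar) :=
  makespan_core_bounds_general V E d hd ends hunif kstar hk hcore hnocore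
end
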